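/- For all i, j ∈ ℕ₀ with j ≤ i one has (D₁^j ∘ D₂)(z_i) = q21^{-i}·b_i·(∏_{l=i-j+1}^{i} [l]_{q11^{-1}})·x1^{i-j}; in particular (D₁^i ∘ D₂)(z_i) = q21^{-i}·b_i·[i]!_{q11^{-1}}·1, and (D₁^j ∘ D₂)(z_i) = 0 whenever j > i. -/

import Mathlib

noncomputable section

variable {k : Type*} [Field k]

/-- The algebra endomorphism of the free algebra on two generators with
`x1 ↦ a • x1`, `x2 ↦ b • x2`. -/
def alph (a b : k) : FreeAlgebra k (Fin 2) →ₐ[k] FreeAlgebra k (Fin 2) :=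
  FreeAlgebra.lift k ![a • FreeAlgebra.ι k 0, b • FreeAlgebra.ι k 1]

/-- The elements `z_i`, defined by `z_0 = x2`, `z_{i+1} = x1·z_i − q11^i·q12·z_i·x1`. -/
def zz (q11 q12 : k) : ℕ → FreeAlgebra k (Fin 2)
  | 0 => FreeAlgebra.ι k 1
  | (i + 1) => FreeAlgebra.ι k 0 * zz q11 q12 i
      - (q11 ^ i * q12) • (zz q11 q12 i * FreeAlgebra.ι k 0)

/-- The elements `u_i`, defined by `u_0 = x1`, `u_{i+1} = u_i·x2 − q12·q22^i·x2·u_i`. -/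
def uu (q12 q22 : k) : ℕ → FreeAlgebra k (Fin 2)
  | 0 => FreeAlgebra.ι k 0
  | (i + 1) => uu q12 q22 i * FreeAlgebra.ι k 1
      - (q12 * q22 ^ i) • (FreeAlgebra.ι k 1 * uu q12 q22 i)

/-- The q-number `[m]_p = 1 + p + ⋯ + p^{m-1}`. -/
def qnum (p : k) (m : ℕ) : k := ∑ j ∈ Finset.range m, p ^ j

/-- The q-factorial `[m]!_p = [1]_p·[2]_p⋯[m]_p`. -/
def qfact (p : k) (m : ℕ) : k := ∏ l ∈ Finset.range m, qnum p (l + 1)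

/-- `b_i = ∏_{j=0}^{i-1} (1 − q11^j·q12·q21)`. -/
def bb (q11 q12 q21 : k) (i : ℕ) : k :=
  ∏ j ∈ Finset.range i, (1 - q11 ^ j * q12 * q21)

/-- `c_i = q21^{-i}·b_i·[i]!_{q11⁻¹}`. -/
def cc (q11 q12 q21 : k) (i : ℕ) : k :=
  q21⁻¹ ^ i * bb q11 q12 q21 i * qfact q11⁻¹ i

/-- `d_{i,0}`. -/
def dd (q11 q12 q21 q22 : k) (i : ℕ) : k :=
  q21⁻¹ * (1 - q11 ^ i * q12 * q21) * qnum q11⁻¹ (i + 1)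
    + (q11 ^ (i * (i + 1)) * q12 ^ i * q21 ^ (i + 1) * q22)⁻¹
    - q11 ^ (i * (i + 1)) * q12 ^ (i + 1) * q21 ^ i * q22

/-!
`D₂` kills `x1` and `α₂(x1) = q21⁻¹ x1`, so applying `D₂` to `z_{i+1} = x1 z_i − q11^i q12 z_i x1` gives
`(q21⁻¹ − q11^i q12) · D₂(z_i)`; hence `D₂(z_i) = q21^{-i} b_i x1^i`. On the other hand
`α₁(x1) = q11⁻¹ x1` and `D₁(x1) = 1`, so the twisted Leibniz rule gives `D₁(x1^m) = [m]_{q11⁻¹} x1^{m-1}`,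
and iterating lowers the exponent one step at a time, collecting the factors `[m]_{q11⁻¹}`.
-/

open Finset

theorem qnum_succ (p : k) (m : ℕ) : qnum p (m + 1) = p * qnum p m + 1 :=
  geom_sum_succ

theorem prod_Icc_one_qnum_eq_qfact (p : k) (n : ℕ) : ∏ l ∈ Icc 1 n, qnum p l = qfact p n := by
  induction n with
  | zero => simp [qfact]
  | succ n ih => rw [qfact, prod_range_succ, ← qfact, ← ih, prod_Icc_succ_top (by omega)]

theorem LinearMap.iterate_map_smul {M : Type*} [AddCommGroup M] [Module k M] (f : M →ₗ[k] M)
    (n : ℕ) (c : k) (v : M) : f^[n] (c • v) = c • f^[n] v := by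
  rw [← Module.End.pow_apply, map_smul, Module.End.pow_apply]

section SkewDerivation

variable {A : Type*} [Ring A] [Algebra k A] {σ : A →ₐ[k] A} {D : A →ₗ[k] A}
  (hD : ∀ a b, D (a * b) = D a * b + σ a * D b)
include hD

theorem map_one_eq_zero_of_leibniz : D 1 = 0 := by
  simpa using hD 1 1

variable {x : A} {c : k} (hσx : σ x = c • x) (hDx : D x = 1)
include hσx hDx

theorem map_pow_succ_of_leibniz (m : ℕ) : D (x ^ (m + 1)) = qnum c (m + 1) • x ^ m := by
  induction m with
  | zero => simp [qnum, hDx]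
  | succ m ih =>
    rw [pow_succ' x (m + 1), hD, hDx, ih, hσx, smul_mul_smul_comm, one_mul, ← pow_succ',
      qnum_succ c (m + 1), add_smul, one_smul, add_comm]

theorem iterate_map_pow_add_of_leibniz (n j : ℕ) :
    D^[j] (x ^ (n + j)) = (∏ l ∈ Icc (n + 1) (n + j), qnum c l) • x ^ n := by
  induction j with
  | zero => simp
  | succ j ih =>
    rw [Function.iterate_succ_apply, ← add_assoc, map_pow_succ_of_leibniz hD hσx hDx,
      D.iterate_map_smul, ih, smul_smul, prod_Icc_succ_top (by omega), mul_comm, add_assoc]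

theorem iterate_map_pow_of_lt_of_leibniz {m j : ℕ} (h : m < j) : D^[j] (x ^ m) = 0 := by
  obtain ⟨t, rfl⟩ := Nat.exists_eq_add_of_le' h
  have hm := iterate_map_pow_add_of_leibniz hD hσx hDx 0 m
  rw [zero_add] at hm
  rw [Function.iterate_add_apply, Function.iterate_succ_apply', hm, pow_zero, map_smul,
    map_one_eq_zero_of_leibniz hD, smul_zero, iterate_map_zero]

end SkewDerivation

theorem bb_succ (q11 q12 q21 : k) (i : ℕ) :
    bb q11 q12 q21 (i + 1) = bb q11 q12 q21 i * (1 - q11 ^ i * q12 * q21) :=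
  prod_range_succ _ _

theorem alph_ι_zero (a b : k) : alph a b (FreeAlgebra.ι k 0) = a • FreeAlgebra.ι k 0 := by
  simp [alph]

theorem map_zz_of_leibniz {q11 q12 q21 : k} (hq21 : q21 ≠ 0) (β : k)
    {D : FreeAlgebra k (Fin 2) →ₗ[k] FreeAlgebra k (Fin 2)}
    (hDx1 : D (FreeAlgebra.ι k 0) = 0) (hDx2 : D (FreeAlgebra.ι k 1) = 1)
    (hD : ∀ a b, D (a * b) = D a * b + alph q21⁻¹ β a * D b) (i : ℕ) :
    D (zz q11 q12 i) = (q21⁻¹ ^ i * bb q11 q12 q21 i) • FreeAlgebra.ι k 0 ^ i := by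
  induction i with
  | zero => simp [zz, bb, hDx2]
  | succ i ih =>
    rw [zz, map_sub, map_smul, hD, hD, ih, hDx1, alph_ι_zero, zero_mul, zero_add, mul_zero,
      add_zero, smul_mul_smul_comm, smul_mul_assoc, ← pow_succ', ← pow_succ, smul_smul,
      ← sub_smul, bb_succ]
    congr 1
    linear_combination (q21⁻¹ ^ i * bb q11 q12 q21 i * q11 ^ i * q12) * inv_mul_cancel₀ hq21

theorem D1_pow_D2_z_eq_general
    (q11 q12 q21 q22 : k)
    (hq21 : q21 ≠ 0)
    (D1 : FreeAlgebra k (Fin 2) →ₗ[k] FreeAlgebra k (Fin 2))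
    (hD1x1 : D1 (FreeAlgebra.ι k 0) = 1)
    (hD1mul : ∀ a b : FreeAlgebra k (Fin 2),
      D1 (a * b) = D1 a * b + alph q11⁻¹ q12⁻¹ a * D1 b)
    (D2 : FreeAlgebra k (Fin 2) →ₗ[k] FreeAlgebra k (Fin 2))
    (hD2x1 : D2 (FreeAlgebra.ι k 0) = 0)
    (hD2x2 : D2 (FreeAlgebra.ι k 1) = 1)
    (hD2mul : ∀ a b : FreeAlgebra k (Fin 2),
      D2 (a * b) = D2 a * b + alph q21⁻¹ q22⁻¹ a * D2 b)
 :
    ∀ i j : ℕ,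
      (j ≤ i → (⇑D1)^[j] (D2 (zz q11 q12 i))
        = (q21⁻¹ ^ i * bb q11 q12 q21 i * ∏ l ∈ Finset.Icc (i - j + 1) i, qnum q11⁻¹ l)
            • ((FreeAlgebra.ι k 0 : FreeAlgebra k (Fin 2)) ^ (i - j))) ∧
      ((⇑D1)^[i] (D2 (zz q11 q12 i))
        = cc q11 q12 q21 i • (1 : FreeAlgebra k (Fin 2))) ∧
      (j > i → (⇑D1)^[j] (D2 (zz q11 q12 i)) = 0) := by
  have hD2z := map_zz_of_leibniz (q11 := q11) (q12 := q12) hq21 q22⁻¹ hD2x1 hD2x2 hD2mul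
  have hD1pow := iterate_map_pow_add_of_leibniz hD1mul (alph_ι_zero q11⁻¹ q12⁻¹) hD1x1
  intro i j
  refine ⟨fun hj => ?_, ?_, fun hj => ?_⟩
  · obtain ⟨n, rfl⟩ := Nat.exists_eq_add_of_le' hj
    rw [hD2z, D1.iterate_map_smul, hD1pow, smul_smul, Nat.add_sub_cancel]
  · have hi := hD1pow 0 i
    rw [zero_add, prod_Icc_one_qnum_eq_qfact] at hi
    rw [hD2z, D1.iterate_map_smul, hi, smul_smul, pow_zero, cc]
  · rw [hD2z, D1.iterate_map_smul,
      iterate_map_pow_of_lt_of_leibniz hD1mul (alph_ι_zero q11⁻¹ q12⁻¹) hD1x1 hj, smul_zero]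

theorem D1_pow_D2_z_eq
    (q11 q12 q21 q22 : k)
    (hq11 : q11 ≠ 0) (hq12 : q12 ≠ 0) (hq21 : q21 ≠ 0) (hq22 : q22 ≠ 0)
    (D1 : FreeAlgebra k (Fin 2) →ₗ[k] FreeAlgebra k (Fin 2))
    (hD1one : D1 1 = 0)
    (hD1x1 : D1 (FreeAlgebra.ι k 0) = 1)
    (hD1x2 : D1 (FreeAlgebra.ι k 1) = 0)
    (hD1mul : ∀ a b : FreeAlgebra k (Fin 2),
      D1 (a * b) = D1 a * b + alph q11⁻¹ q12⁻¹ a * D1 b)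
    (D2 : FreeAlgebra k (Fin 2) →ₗ[k] FreeAlgebra k (Fin 2))
    (hD2one : D2 1 = 0)
    (hD2x1 : D2 (FreeAlgebra.ι k 0) = 0)
    (hD2x2 : D2 (FreeAlgebra.ι k 1) = 1)
    (hD2mul : ∀ a b : FreeAlgebra k (Fin 2),
      D2 (a * b) = D2 a * b + alph q21⁻¹ q22⁻¹ a * D2 b)
 :
    ∀ i j : ℕ,
      (j ≤ i → (⇑D1)^[j] (D2 (zz q11 q12 i))
        = (q21⁻¹ ^ i * bb q11 q12 q21 i * ∏ l ∈ Finset.Icc (i - j + 1) i, qnum q11⁻¹ l)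
            • ((FreeAlgebra.ι k 0 : FreeAlgebra k (Fin 2)) ^ (i - j))) ∧
      ((⇑D1)^[i] (D2 (zz q11 q12 i))
        = cc q11 q12 q21 i • (1 : FreeAlgebra k (Fin 2))) ∧
      (j > i → (⇑D1)^[j] (D2 (zz q11 q12 i)) = 0) :=
  D1_pow_D2_z_eq_general q11 q12 q21 q22 hq21 D1 hD1x1 hD1mul D2 hD2x1 hD2x2 hD2mul
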